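/- arXiv:2111.07343 — 2 statements merged into one kernel-verified Lean document; each statement's English description precedes it below -/
import Mathlib

section
/- The signed count L^{se}_{n³} − L^{so}_{n³} of symbol-even minus symbol-odd Latin cubes of order n equals the coefficient of the squarefree monomial Π_{i,j,k ∈ [n]} X_{ijk} in Det(X)^(n²), where Det(X) = Σ_{σ,τ ∈ S_n} sgn(σ)sgn(τ) Π_{i=1}^n X_{i,σ(i),τ(i)} is the hyperdeterminant of the n×n×n matrix of indeterminates. -/
/-- A Latin cube of order `n`: a map `[n]³ → [n²]` that is a bijection on each
x-slice, each y-slice, and each z-slice. -/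
def IsLatinCube (n : ℕ) (L : Fin n × Fin n × Fin n → Fin (n ^ 2)) : Prop :=
  (∀ i : Fin n, Function.Bijective fun p : Fin n × Fin n => L (i, p.1, p.2)) ∧
  (∀ j : Fin n, Function.Bijective fun p : Fin n × Fin n => L (p.1, j, p.2)) ∧
  (∀ k : Fin n, Function.Bijective fun p : Fin n × Fin n => L (p.1, p.2, k))

/-- The Latin cube `L` has symbol sign `ε ∈ ℤˣ`: each symbol `s ∈ [n²]` occupies the
graph of a permutation pair `(σ_s, τ_s)` (so `L (i, σ_s i, τ_s i) = s` for all `i`),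
and the product of the signs `sgn(σ_s)·sgn(τ_s)` over all symbols is `ε`. -/
def HasSymbolSign (n : ℕ) (L : Fin n × Fin n × Fin n → Fin (n ^ 2)) (ε : ℤˣ) : Prop :=
  ∃ P : Fin (n ^ 2) → Equiv.Perm (Fin n) × Equiv.Perm (Fin n),
    (∀ s : Fin (n ^ 2), ∀ i : Fin n, L (i, (P s).1 i, (P s).2 i) = s) ∧
    (∏ s : Fin (n ^ 2), Equiv.Perm.sign (P s).1 * Equiv.Perm.sign (P s).2) = ε

/-- The hyperdeterminant `Det(X) = ∑_{σ,τ ∈ S_n} sgn(σ)sgn(τ) ∏_i X_{i,σ(i),τ(i)}`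
of the `n×n×n` array of indeterminates. -/
noncomputable def hyperDet (n : ℕ) : MvPolynomial (Fin n × Fin n × Fin n) ℤ :=
  ∑ σ : Equiv.Perm (Fin n), ∑ τ : Equiv.Perm (Fin n),
    MvPolynomial.C ((Equiv.Perm.sign σ : ℤ) * (Equiv.Perm.sign τ : ℤ)) *
      ∏ i : Fin n, MvPolynomial.X (i, σ i, τ i)

open Finset Function MvPolynomial

namespace LCAux
open scoped Classical

variable {n : ℕ}

lemma prod_monomial {α σ : Type*} (s : Finset α) (m : α → (σ →₀ ℕ)) :
    (∏ a ∈ s, monomial (m a) (1:ℤ)) = monomial (∑ a ∈ s, m a) 1 := by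
  induction s using Finset.cons_induction with
  | empty => simp
  | cons a s h ih =>
      rw [Finset.prod_cons, ih, Finset.sum_cons, monomial_mul, one_mul]

lemma card_filter_eq_one_iff {α β : Type*} [Fintype α] [DecidableEq β]
    (g : α → β) (x : β) :
    (Finset.univ.filter fun p => g p = x).card = 1 ↔ ∃! p, g p = x := by
  rw [Finset.card_eq_one]
  constructor
  · rintro ⟨a, ha⟩
    have h := Finset.eq_singleton_iff_unique_mem.mp ha
    refine ⟨a, by simpa using h.1, fun y hy => ?_⟩
    exact h.2 y (by simp [hy])
  · rintro ⟨a, ha, hu⟩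
    exact ⟨a, Finset.eq_singleton_iff_unique_mem.mpr
      ⟨by simp [ha], fun y hy => hu y (by simpa using hy)⟩⟩

def key (f : Fin (n ^ 2) → Equiv.Perm (Fin n) × Equiv.Perm (Fin n)) :
    Fin (n ^ 2) × Fin n → Fin n × Fin n × Fin n :=
  fun p => (p.2, (f p.1).1 p.2, (f p.1).2 p.2)

noncomputable def sgn (f : Fin (n ^ 2) → Equiv.Perm (Fin n) × Equiv.Perm (Fin n)) : ℤˣ :=
  ∏ s : Fin (n ^ 2), Equiv.Perm.sign (f s).1 * Equiv.Perm.sign (f s).2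

noncomputable def dd (f : Fin (n ^ 2) → Equiv.Perm (Fin n) × Equiv.Perm (Fin n)) :
    (Fin n × Fin n × Fin n) →₀ ℕ :=
  ∑ p : Fin (n ^ 2) × Fin n, Finsupp.single (key f p) 1

lemma dd_eq_iff (f : Fin (n ^ 2) → Equiv.Perm (Fin n) × Equiv.Perm (Fin n)) :
    dd f = (Finsupp.equivFunOnFinite.symm fun _ => 1) ↔ Bijective (key f) := by
  rw [Function.bijective_iff_existsUnique]
  constructor
  · intro h x
    have hx := DFunLike.congr_fun h x
    rw [← card_filter_eq_one_iff (key f) x]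
    simpa [dd, Finsupp.finset_sum_apply, Finsupp.single_apply, Finset.sum_boole] using hx
  · intro h
    ext x
    have := (card_filter_eq_one_iff (key f) x).mpr (h x)
    simpa [dd, Finsupp.finset_sum_apply, Finsupp.single_apply, Finset.sum_boole] using this

lemma hyperDet_eq :
    hyperDet n = ∑ p : Equiv.Perm (Fin n) × Equiv.Perm (Fin n),
      monomial (∑ i : Fin n, Finsupp.single ((i, p.1 i, p.2 i) : Fin n × Fin n × Fin n) 1)
        ((Equiv.Perm.sign p.1 : ℤ) * (Equiv.Perm.sign p.2 : ℤ)) := by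
  rw [hyperDet]
  conv_rhs => rw [Fintype.sum_prod_type]
  refine Finset.sum_congr rfl fun σ _ => Finset.sum_congr rfl fun τ _ => ?_
  set p : Equiv.Perm (Fin n) × Equiv.Perm (Fin n) := (σ, τ) with hp
  have hx : (∏ i : Fin n, (X (i, p.1 i, p.2 i) : MvPolynomial (Fin n × Fin n × Fin n) ℤ))
      = monomial (∑ i : Fin n, Finsupp.single ((i, p.1 i, p.2 i) : Fin n × Fin n × Fin n) 1) 1 :=
    prod_monomial _ _
  rw [hx, C_mul_monomial, mul_one]

lemma coeff_hyperDet_pow :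
    MvPolynomial.coeff (Finsupp.equivFunOnFinite.symm fun _ => 1)
        ((hyperDet n) ^ (n ^ 2)) =
      ∑ f ∈ Finset.univ.filter
          (fun f : Fin (n ^ 2) → Equiv.Perm (Fin n) × Equiv.Perm (Fin n) =>
            Bijective (key f)),
        ((sgn f : ℤˣ) : ℤ) := by
  have h2 : (hyperDet n) ^ (n ^ 2) = ∏ _s : Fin (n ^ 2), hyperDet n := by
    simp [Finset.prod_const]
  rw [h2]
  conv_lhs => rw [hyperDet_eq]
  rw [Finset.prod_univ_sum]
  rw [Fintype.piFinset_univ]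
  have h3 : ∀ f : Fin (n ^ 2) → Equiv.Perm (Fin n) × Equiv.Perm (Fin n),
      (∏ s : Fin (n ^ 2),
        monomial (∑ i : Fin n, Finsupp.single ((i, (f s).1 i, (f s).2 i) : Fin n × Fin n × Fin n) 1)
          ((Equiv.Perm.sign (f s).1 : ℤ) * (Equiv.Perm.sign (f s).2 : ℤ)))
      = monomial (dd f) ((sgn f : ℤˣ) : ℤ) := by
    intro f
    have hC : ∀ s : Fin (n ^ 2),
        (monomial (∑ i : Fin n, Finsupp.single ((i, (f s).1 i, (f s).2 i) : Fin n × Fin n × Fin n) 1)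
          ((Equiv.Perm.sign (f s).1 : ℤ) * (Equiv.Perm.sign (f s).2 : ℤ))
          : MvPolynomial (Fin n × Fin n × Fin n) ℤ)
        = C ((Equiv.Perm.sign (f s).1 : ℤ) * (Equiv.Perm.sign (f s).2 : ℤ)) *
            monomial (∑ i : Fin n, Finsupp.single ((i, (f s).1 i, (f s).2 i) : Fin n × Fin n × Fin n) 1) 1 := by
      intro s; rw [C_mul_monomial, mul_one]
    simp_rw [hC]
    rw [Finset.prod_mul_distrib, prod_monomial, ← map_prod, C_mul_monomial, mul_one]
    congr 1
    · rw [dd, Fintype.sum_prod_type]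
      rfl
    · rw [sgn]
      push_cast
      rfl
  simp_rw [h3]
  rw [MvPolynomial.coeff_sum]
  simp_rw [MvPolynomial.coeff_monomial]
  rw [Finset.sum_filter]
  refine Finset.sum_congr rfl fun f _ => ?_
  rw [if_congr (dd_eq_iff f) rfl rfl]

end LCAux

namespace LCAux
open scoped Classical

variable {n : ℕ}
variable {f : Fin (n ^ 2) → Equiv.Perm (Fin n) × Equiv.Perm (Fin n)}

noncomputable def toCube (f : Fin (n ^ 2) → Equiv.Perm (Fin n) × Equiv.Perm (Fin n))
    (h : Function.Bijective (key f)) : Fin n × Fin n × Fin n → Fin (n ^ 2) :=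
  fun x => ((Equiv.ofBijective _ h).symm x).1

lemma toCube_key (h : Function.Bijective (key f)) (s : Fin (n ^ 2)) (i : Fin n) :
    toCube f h (key f (s, i)) = s := by
  have : (Equiv.ofBijective (key f) h).symm (key f (s, i)) = (s, i) :=
    (Equiv.ofBijective (key f) h).symm_apply_apply (s, i)
  simp [toCube, this]

lemma key_toCube (h : Function.Bijective (key f)) (x : Fin n × Fin n × Fin n) :
    key f (toCube f h x, x.1) = x := by
  have h1 := (Equiv.ofBijective (key f) h).apply_symm_apply x
  have h2 : ((Equiv.ofBijective (key f) h).symm x) = (toCube f h x, x.1) := by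
    refine Prod.ext rfl ?_
    have : (key f ((Equiv.ofBijective (key f) h).symm x)).1
        = ((Equiv.ofBijective (key f) h).symm x).2 := rfl
    rw [show (key f ((Equiv.ofBijective (key f) h).symm x)) = x from h1] at this
    exact this.symm
  rw [← h2]; exact h1

lemma point_unique (h : Function.Bijective (key f)) {x : Fin n × Fin n × Fin n}
    {s : Fin (n ^ 2)} (hx : toCube f h x = s) : x = key f (s, x.1) := by
  rw [← hx]; exact (key_toCube h x).symm

lemma card_aux : Fintype.card (Fin n × Fin n) = Fintype.card (Fin (n ^ 2)) := by
  simp [sq]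

lemma toCube_latin (h : Function.Bijective (key f)) : IsLatinCube n (toCube f h) := by
  refine ⟨fun i => ?_, fun j => ?_, fun k => ?_⟩ <;>
    rw [Fintype.bijective_iff_injective_and_card] <;>
    refine ⟨?_, card_aux⟩
  · intro p q hpq
    set s := toCube f h (i, q.1, q.2) with hs
    have hp : ((i, p.1, p.2) : Fin n × Fin n × Fin n) = key f (s, i) :=
      point_unique h (by exact hpq)
    have hq : ((i, q.1, q.2) : Fin n × Fin n × Fin n) = key f (s, i) :=
      point_unique h rfl
    have := hp.trans hq.symm
    exact Prod.ext (congrArg (fun z => z.2.1) this) (congrArg (fun z => z.2.2) this)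
  · intro p q hpq
    set s := toCube f h (q.1, j, q.2) with hs
    have hp : ((p.1, j, p.2) : Fin n × Fin n × Fin n) = key f (s, p.1) :=
      point_unique h (by exact hpq)
    have hq : ((q.1, j, q.2) : Fin n × Fin n × Fin n) = key f (s, q.1) :=
      point_unique h rfl
    have hj1 : (f s).1 p.1 = j := (congrArg (fun z => z.2.1) hp).symm
    have hj2 : (f s).1 q.1 = j := (congrArg (fun z => z.2.1) hq).symm
    have h1 : p.1 = q.1 := (f s).1.injective (hj1.trans hj2.symm)
    have h2 : p.2 = q.2 := by
      have e1 : (f s).2 p.1 = p.2 := (congrArg (fun z => z.2.2) hp).symm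
      have e2 : (f s).2 q.1 = q.2 := (congrArg (fun z => z.2.2) hq).symm
      rw [← e1, ← e2, h1]
    exact Prod.ext h1 h2
  · intro p q hpq
    set s := toCube f h (q.1, q.2, k) with hs
    have hp : ((p.1, p.2, k) : Fin n × Fin n × Fin n) = key f (s, p.1) :=
      point_unique h (by exact hpq)
    have hq : ((q.1, q.2, k) : Fin n × Fin n × Fin n) = key f (s, q.1) :=
      point_unique h rfl
    have hj1 : (f s).2 p.1 = k := (congrArg (fun z => z.2.2) hp).symm
    have hj2 : (f s).2 q.1 = k := (congrArg (fun z => z.2.2) hq).symm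
    have h1 : p.1 = q.1 := (f s).2.injective (hj1.trans hj2.symm)
    have h2 : p.2 = q.2 := by
      have e1 : (f s).1 p.1 = p.2 := (congrArg (fun z => z.2.1) hp).symm
      have e2 : (f s).1 q.1 = q.2 := (congrArg (fun z => z.2.1) hq).symm
      rw [← e1, ← e2, h1]
    exact Prod.ext h1 h2

end LCAux

namespace LCAux
open scoped Classical

variable {n : ℕ}

lemma key_injective_of_prop {L : Fin n × Fin n × Fin n → Fin (n ^ 2)}
    {P : Fin (n ^ 2) → Equiv.Perm (Fin n) × Equiv.Perm (Fin n)}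
    (hP : ∀ s : Fin (n ^ 2), ∀ i : Fin n, L (i, (P s).1 i, (P s).2 i) = s) :
    Function.Bijective (key P) := by
  rw [Fintype.bijective_iff_injective_and_card]
  constructor
  · intro p q hpq
    have hL : ∀ r : Fin (n ^ 2) × Fin n, L (key P r) = r.1 := fun r => hP r.1 r.2
    have h1 : p.1 = q.1 := by rw [← hL p, ← hL q, hpq]
    have h2 : p.2 = q.2 := congrArg Prod.fst hpq
    exact Prod.ext h1 h2
  · simp [sq, pow_succ, mul_comm, mul_assoc]

lemma card_latin (ε : ℤˣ) :
    Nat.card {L : Fin n × Fin n × Fin n → Fin (n ^ 2) //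
        IsLatinCube n L ∧ HasSymbolSign n L ε}
      = (Finset.univ.filter
          (fun f : Fin (n ^ 2) → Equiv.Perm (Fin n) × Equiv.Perm (Fin n) =>
            Function.Bijective (key f) ∧ sgn f = ε)).card := by
  have hc : (Finset.univ.filter
        (fun f : Fin (n ^ 2) → Equiv.Perm (Fin n) × Equiv.Perm (Fin n) =>
          Function.Bijective (key f) ∧ sgn f = ε)).card
      = Nat.card {f : Fin (n ^ 2) → Equiv.Perm (Fin n) × Equiv.Perm (Fin n) //
          Function.Bijective (key f) ∧ sgn f = ε} := by
    rw [Nat.card_eq_fintype_card, Fintype.card_subtype]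
  rw [hc]
  refine Nat.card_congr (Equiv.symm (Equiv.ofBijective
    (fun a => (⟨toCube a.1 a.2.1, toCube_latin a.2.1, a.1, toCube_key a.2.1, a.2.2⟩ :
      {L : Fin n × Fin n × Fin n → Fin (n ^ 2) // IsLatinCube n L ∧ HasSymbolSign n L ε}))
    ⟨?_, ?_⟩))
  · -- injective
    rintro ⟨f, hf, hsf⟩ ⟨g, hg, hsg⟩ hfg
    have hcube : toCube f hf = toCube g hg := congrArg Subtype.val hfg
    refine Subtype.ext (funext fun s => ?_)
    have hfg' : ∀ i : Fin n, key f (s, i) = key g (s, i) := by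
      intro i
      have h1 : toCube f hf (key g (s, i)) = s := by rw [hcube]; exact toCube_key hg s i
      have h2 := point_unique hf h1
      exact h2.symm
    have h1 : (f s).1 = (g s).1 := Equiv.ext fun i =>
      congrArg (fun z => z.2.1) (hfg' i)
    have h2 : (f s).2 = (g s).2 := Equiv.ext fun i =>
      congrArg (fun z => z.2.2) (hfg' i)
    exact Prod.ext h1 h2
  · -- surjective
    rintro ⟨L, hL, P, hP, hsgn⟩
    have hgood : Function.Bijective (key P) := key_injective_of_prop hP
    refine ⟨⟨P, hgood, hsgn⟩, Subtype.ext (funext fun x => ?_)⟩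
    have h1 : key P (toCube P hgood x, x.1) = x := key_toCube hgood x
    have h2 : L (key P (toCube P hgood x, x.1)) = toCube P hgood x :=
      hP (toCube P hgood x) x.1
    rw [h1] at h2
    exact h2.symm

end LCAux

/-- The number of symbol-even Latin cubes minus the number of symbol-odd Latin cubes
of order `n` equals the coefficient of the squarefree monomial `∏_{i,j,k} X_{ijk}`
in `Det(X)^(n²)`. -/
theorem symbolSigned_latinCube_count_eq_hyperDet_coeff (n : ℕ) :
    (Nat.card {L : Fin n × Fin n × Fin n → Fin (n ^ 2) //
        IsLatinCube n L ∧ HasSymbolSign n L 1} : ℤ) -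
      (Nat.card {L : Fin n × Fin n × Fin n → Fin (n ^ 2) //
        IsLatinCube n L ∧ HasSymbolSign n L (-1)} : ℤ) =
      MvPolynomial.coeff (Finsupp.equivFunOnFinite.symm fun _ => 1)
        ((hyperDet n) ^ (n ^ 2)) := by
  classical
  rw [LCAux.coeff_hyperDet_pow, LCAux.card_latin 1, LCAux.card_latin (-1)]
  have h1 : ∀ f ∈ Finset.univ.filter
      (fun f : Fin (n ^ 2) → Equiv.Perm (Fin n) × Equiv.Perm (Fin n) =>
        Function.Bijective (LCAux.key f)),
      ((LCAux.sgn f : ℤˣ) : ℤ) = if LCAux.sgn f = 1 then (1:ℤ) else -1 := by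
    intro f _
    rcases Int.units_eq_one_or (LCAux.sgn f) with h | h <;> simp [h]
  rw [Finset.sum_congr rfl h1, Finset.sum_ite, Finset.sum_const, Finset.sum_const,
    Finset.filter_filter, Finset.filter_filter]
  have h2 : (Finset.univ.filter
      (fun f : Fin (n ^ 2) → Equiv.Perm (Fin n) × Equiv.Perm (Fin n) =>
        Function.Bijective (LCAux.key f) ∧ ¬ LCAux.sgn f = 1))
      = Finset.univ.filter
      (fun f : Fin (n ^ 2) → Equiv.Perm (Fin n) × Equiv.Perm (Fin n) =>
        Function.Bijective (LCAux.key f) ∧ LCAux.sgn f = -1) := by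
    refine Finset.filter_congr fun f _ => ?_
    rcases Int.units_eq_one_or (LCAux.sgn f) with h | h <;> simp [h]
  rw [h2]
  push_cast [nsmul_eq_mul]
  ring
end

section
/- L^{se}_{n³} − L^{so}_{n³} = Σ_{A ∈ B_n} (−1)^{σ₀(A)} Det(A)^{n²}, where B_n is the set of all n×n×n arrays with entries in {0,1}, σ₀(A) is the number of zero entries of A, and Det is the 3-dimensional hyperdeterminant Det(A) = Σ_{σ,τ ∈ S_n} sgn(σ)sgn(τ) Π_{i=1}^n A_{i,σ(i),τ(i)}. -/
/-- The hyperdeterminant of an `n×n×n` 0/1-array (given as a `Bool`-valued array):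
`Det(A) = ∑_{σ,τ ∈ S_n} sgn(σ)sgn(τ) ∏_i A_{i,σ(i),τ(i)}`. -/
def hyperDetBool (n : ℕ) (A : Fin n × Fin n × Fin n → Bool) : ℤ :=
  ∑ σ : Equiv.Perm (Fin n), ∑ τ : Equiv.Perm (Fin n),
    (Equiv.Perm.sign σ : ℤ) * (Equiv.Perm.sign τ : ℤ) *
      ∏ i : Fin n, (if A (i, σ i, τ i) then 1 else 0 : ℤ)

namespace LatinAux

variable (n : ℕ)

abbrev PP := Fin (n ^ 2) → Equiv.Perm (Fin n) × Equiv.Perm (Fin n)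

/-- `P` covers every cell of the cube. -/
def covers (P : PP n) : Prop :=
  ∀ p : Fin n × Fin n × Fin n, ∃ s : Fin (n ^ 2),
    (P s).1 p.1 = p.2.1 ∧ (P s).2 p.1 = p.2.2

instance : DecidablePred (covers n) := fun _ => Fintype.decidableForallFintype

def wt (P : PP n) : ℤˣ :=
  ∏ s : Fin (n ^ 2), Equiv.Perm.sign (P s).1 * Equiv.Perm.sign (P s).2

lemma inner_sum (P : PP n) :
    (∑ A : Fin n × Fin n × Fin n → Bool,
      (-1 : ℤ) ^ ((Finset.univ.filter fun p => A p = false).card) *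
        ∏ s : Fin (n ^ 2), ∏ i : Fin n,
          (if A (i, (P s).1 i, (P s).2 i) then 1 else 0 : ℤ))
      = if covers n P then 1 else 0 := by
  classical
  have key : ∀ A : Fin n × Fin n × Fin n → Bool,
      (-1 : ℤ) ^ ((Finset.univ.filter fun p => A p = false).card) *
        ∏ s : Fin (n ^ 2), ∏ i : Fin n,
          (if A (i, (P s).1 i, (P s).2 i) then 1 else 0 : ℤ)
      = ∏ p : Fin n × Fin n × Fin n,
          ((if A p = false then (-1 : ℤ) else 1) *
            (if (∃ s : Fin (n ^ 2), (P s).1 p.1 = p.2.1 ∧ (P s).2 p.1 = p.2.2)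
              then (if A p then (1:ℤ) else 0) else 1)) := by
    intro A
    rw [Finset.prod_mul_distrib]
    congr 1
    · rw [Finset.prod_ite, Finset.prod_const, Finset.prod_const, one_pow, mul_one]
    · have h1 : (∏ s : Fin (n ^ 2), ∏ i : Fin n,
          (if A (i, (P s).1 i, (P s).2 i) then 1 else 0 : ℤ))
          = if ∀ s : Fin (n ^ 2), ∀ i : Fin n, A (i, (P s).1 i, (P s).2 i) = true
            then 1 else 0 := by
        have : ∀ s : Fin (n ^ 2), (∏ i : Fin n,
            (if A (i, (P s).1 i, (P s).2 i) then 1 else 0 : ℤ))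
            = if ∀ i : Fin n, A (i, (P s).1 i, (P s).2 i) = true then 1 else 0 := by
          intro s
          simp [Finset.prod_boole]
        rw [Finset.prod_congr rfl fun s _ => this s]
        simp [Finset.prod_boole]
      have h2 : (∏ p : Fin n × Fin n × Fin n,
          (if (∃ s : Fin (n ^ 2), (P s).1 p.1 = p.2.1 ∧ (P s).2 p.1 = p.2.2)
            then (if A p then (1:ℤ) else 0) else 1))
          = if ∀ p : Fin n × Fin n × Fin n,
              (∃ s : Fin (n ^ 2), (P s).1 p.1 = p.2.1 ∧ (P s).2 p.1 = p.2.2) → A p = true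
            then 1 else 0 := by
        rw [Finset.prod_ite, Finset.prod_const, one_pow, mul_one, Finset.prod_boole]
        congr 1
        simp only [eq_iff_iff, Finset.mem_filter, Finset.mem_univ, true_and]
      rw [h1, h2]
      congr 1
      simp only [eq_iff_iff]
      constructor
      · rintro h p ⟨s, hs1, hs2⟩
        have := h s p.1
        rw [show ((p.1 : Fin n), (P s).1 p.1, (P s).2 p.1) = p by
          rw [hs1, hs2]] at this
        exact this
      · intro h s i
        exact h (i, (P s).1 i, (P s).2 i) ⟨s, rfl, rfl⟩
  rw [Finset.sum_congr rfl fun A _ => key A]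
  rw [← Fintype.piFinset_univ,
    ← Finset.prod_univ_sum (fun _ : Fin n × Fin n × Fin n => (Finset.univ : Finset Bool))
      (fun p b => (if b = false then (-1 : ℤ) else 1) *
        (if (∃ s : Fin (n ^ 2), (P s).1 p.1 = p.2.1 ∧ (P s).2 p.1 = p.2.2)
          then (if b then (1:ℤ) else 0) else 1))]
  have : ∀ p : Fin n × Fin n × Fin n,
      (∑ b : Bool, ((if b = false then (-1 : ℤ) else 1) *
        (if (∃ s : Fin (n ^ 2), (P s).1 p.1 = p.2.1 ∧ (P s).2 p.1 = p.2.2)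
          then (if b then (1:ℤ) else 0) else 1)))
      = if (∃ s : Fin (n ^ 2), (P s).1 p.1 = p.2.1 ∧ (P s).2 p.1 = p.2.2)
        then 1 else 0 := by
    intro p
    by_cases h : (∃ s : Fin (n ^ 2), (P s).1 p.1 = p.2.1 ∧ (P s).2 p.1 = p.2.2) <;>
      simp [h, Fintype.sum_bool]
  rw [Finset.prod_congr rfl fun p _ => this p, Finset.prod_boole]
  congr 1
  simp only [eq_iff_iff, covers]
  constructor
  · intro h p; exact h p (Finset.mem_univ p)
  · intro h p _; exact h p

lemma rhs_eq :
    (∑ A : Fin n × Fin n × Fin n → Bool,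
      (-1 : ℤ) ^ ((Finset.univ.filter fun p => A p = false).card) *
        (hyperDetBool n A) ^ (n ^ 2))
    = ∑ P : PP n, if covers n P then ((wt n P : ℤˣ) : ℤ) else 0 := by
  classical
  have hdet : ∀ A, hyperDetBool n A
      = ∑ q : Equiv.Perm (Fin n) × Equiv.Perm (Fin n),
        (Equiv.Perm.sign q.1 : ℤ) * (Equiv.Perm.sign q.2 : ℤ) *
          ∏ i : Fin n, (if A (i, q.1 i, q.2 i) then 1 else 0 : ℤ) := by
    intro A; rw [hyperDetBool]
    exact (Fintype.sum_prod_type (fun q : Equiv.Perm (Fin n) × Equiv.Perm (Fin n) =>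
      (Equiv.Perm.sign q.1 : ℤ) * (Equiv.Perm.sign q.2 : ℤ) *
        ∏ i : Fin n, (if A (i, q.1 i, q.2 i) then 1 else 0 : ℤ))).symm
  have hpow : ∀ A, (hyperDetBool n A) ^ (n ^ 2)
      = ∑ P : PP n, ∏ s : Fin (n ^ 2),
          ((Equiv.Perm.sign (P s).1 : ℤ) * (Equiv.Perm.sign (P s).2 : ℤ) *
            ∏ i : Fin n, (if A (i, (P s).1 i, (P s).2 i) then 1 else 0 : ℤ)) := by
    intro A
    rw [hdet A]
    conv_lhs => rw [show n ^ 2 = Fintype.card (Fin (n ^ 2)) from (Fintype.card_fin _).symm]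
    rw [← Finset.card_univ, ← Finset.prod_const,
      Finset.prod_univ_sum (fun _ : Fin (n ^ 2) =>
        (Finset.univ : Finset (Equiv.Perm (Fin n) × Equiv.Perm (Fin n))))
        (fun _ q => (Equiv.Perm.sign q.1 : ℤ) * (Equiv.Perm.sign q.2 : ℤ) *
          ∏ i : Fin n, (if A (i, q.1 i, q.2 i) then 1 else 0 : ℤ)),
      Fintype.piFinset_univ]
  rw [Finset.sum_congr rfl fun A _ => by rw [hpow A, Finset.mul_sum]]
  rw [Finset.sum_comm]
  refine Finset.sum_congr rfl fun P _ => ?_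
  have split : ∀ A : Fin n × Fin n × Fin n → Bool,
      (-1 : ℤ) ^ ((Finset.univ.filter fun p => A p = false).card) *
        ∏ s : Fin (n ^ 2),
          ((Equiv.Perm.sign (P s).1 : ℤ) * (Equiv.Perm.sign (P s).2 : ℤ) *
            ∏ i : Fin n, (if A (i, (P s).1 i, (P s).2 i) then 1 else 0 : ℤ))
      = (∏ s : Fin (n ^ 2),
          (Equiv.Perm.sign (P s).1 : ℤ) * (Equiv.Perm.sign (P s).2 : ℤ)) *
        ((-1 : ℤ) ^ ((Finset.univ.filter fun p => A p = false).card) *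
          ∏ s : Fin (n ^ 2), ∏ i : Fin n,
            (if A (i, (P s).1 i, (P s).2 i) then 1 else 0 : ℤ)) := by
    intro A
    rw [Finset.prod_mul_distrib]
    ring
  rw [Finset.sum_congr rfl fun A _ => split A, ← Finset.mul_sum, inner_sum n P]
  have hwt : ((wt n P : ℤˣ) : ℤ)
      = ∏ s : Fin (n ^ 2),
          (Equiv.Perm.sign (P s).1 : ℤ) * (Equiv.Perm.sign (P s).2 : ℤ) := by
    rw [wt]; push_cast; rfl
  by_cases h : covers n P <;> simp [h, hwt]

section Counting

variable {n : ℕ}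

noncomputable def sliceEquiv (P : PP n) (h : covers n P) (i : Fin n) :
    Fin (n ^ 2) ≃ Fin n × Fin n :=
  Equiv.ofBijective (fun s => ((P s).1 i, (P s).2 i)) (by
    rw [Fintype.bijective_iff_surjective_and_card]
    constructor
    · rintro ⟨j, k⟩
      obtain ⟨s, h1, h2⟩ := h (i, j, k)
      exact ⟨s, by simp_all⟩
    · simp [sq])

noncomputable def toL (P : PP n) (h : covers n P) :
    Fin n × Fin n × Fin n → Fin (n ^ 2) :=
  fun p => (sliceEquiv P h p.1).symm (p.2.1, p.2.2)

lemma toL_spec1 (P : PP n) (h : covers n P) (i j k : Fin n) :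
    (P (toL P h (i, j, k))).1 i = j ∧ (P (toL P h (i, j, k))).2 i = k := by
  have := (sliceEquiv P h i).apply_symm_apply (j, k)
  exact ⟨congrArg Prod.fst this, congrArg Prod.snd this⟩

lemma toL_spec2 (P : PP n) (h : covers n P) (s : Fin (n ^ 2)) (i : Fin n) :
    toL P h (i, (P s).1 i, (P s).2 i) = s :=
  (sliceEquiv P h i).symm_apply_apply s

lemma toL_latin (P : PP n) (h : covers n P) : IsLatinCube n (toL P h) := by
  refine ⟨fun i => ?_, fun j => ?_, fun k => ?_⟩
  · have heq : (fun p : Fin n × Fin n => toL P h (i, p.1, p.2))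
        = ⇑(sliceEquiv P h i).symm := by
      funext p; rfl
    rw [heq]; exact (sliceEquiv P h i).symm.bijective
  · rw [Fintype.bijective_iff_injective_and_card]
    refine ⟨?_, by simp [sq]⟩
    rintro ⟨i1, k1⟩ ⟨i2, k2⟩ hdeq
    simp only at hdeq
    have h1 := toL_spec1 P h i1 j k1
    have h2 := toL_spec1 P h i2 j k2
    rw [hdeq] at h1
    have hi : i1 = i2 := (P (toL P h (i2, j, k2))).1.injective (h1.1.trans h2.1.symm)
    subst hi
    have hk : k1 = k2 := h1.2.symm.trans h2.2
    rw [hk]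
  · rw [Fintype.bijective_iff_injective_and_card]
    refine ⟨?_, by simp [sq]⟩
    rintro ⟨i1, j1⟩ ⟨i2, j2⟩ hdeq
    simp only at hdeq
    have h1 := toL_spec1 P h i1 j1 k
    have h2 := toL_spec1 P h i2 j2 k
    rw [hdeq] at h1
    have hi : i1 = i2 := (P (toL P h (i2, j2, k))).2.injective (h1.2.trans h2.2.symm)
    subst hi
    have hj : j1 = j2 := h1.1.symm.trans h2.1
    rw [hj]

lemma toL_hss (P : PP n) (h : covers n P) {ε : ℤˣ} (hw : wt n P = ε) :
    HasSymbolSign n (toL P h) ε :=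
  ⟨P, fun s i => toL_spec2 P h s i, hw⟩

lemma latin_covers (L : Fin n × Fin n × Fin n → Fin (n ^ 2)) (hL : IsLatinCube n L)
    (P : PP n) (hP : ∀ s i, L (i, (P s).1 i, (P s).2 i) = s) : covers n P := by
  rintro ⟨i, j, k⟩
  refine ⟨L (i, j, k), ?_⟩
  have key : L (i, (P (L (i, j, k))).1 i, (P (L (i, j, k))).2 i) = L (i, j, k) :=
    hP (L (i, j, k)) i
  have := (hL.1 i).injective
    (a₁ := ((P (L (i, j, k))).1 i, (P (L (i, j, k))).2 i)) (a₂ := (j, k)) key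
  exact ⟨congrArg Prod.fst this, congrArg Prod.snd this⟩

lemma toL_eq (L : Fin n × Fin n × Fin n → Fin (n ^ 2)) (hL : IsLatinCube n L)
    (P : PP n) (hP : ∀ s i, L (i, (P s).1 i, (P s).2 i) = s)
    (h : covers n P) : toL P h = L := by
  funext p
  obtain ⟨i, j, k⟩ := p
  obtain ⟨h1, h2⟩ := toL_spec1 P h i j k
  have key : L (i, (P (toL P h (i, j, k))).1 i, (P (toL P h (i, j, k))).2 i)
      = L (i, j, k) := by rw [h1, h2]
  rw [← key, hP (toL P h (i, j, k)) i]

lemma P_unique (L : Fin n × Fin n × Fin n → Fin (n ^ 2)) (hL : IsLatinCube n L)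
    (P P' : PP n) (hP : ∀ s i, L (i, (P s).1 i, (P s).2 i) = s)
    (hP' : ∀ s i, L (i, (P' s).1 i, (P' s).2 i) = s) : P = P' := by
  funext s
  have key : ∀ i, (P s).1 i = (P' s).1 i ∧ (P s).2 i = (P' s).2 i := by
    intro i
    have := (hL.1 i).injective
      (a₁ := ((P s).1 i, (P s).2 i)) (a₂ := ((P' s).1 i, (P' s).2 i))
      ((hP s i).trans (hP' s i).symm)
    exact ⟨congrArg Prod.fst this, congrArg Prod.snd this⟩
  exact Prod.ext (Equiv.ext fun i => (key i).1) (Equiv.ext fun i => (key i).2)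

lemma count_eq (ε : ℤˣ) :
    Nat.card {L : Fin n × Fin n × Fin n → Fin (n ^ 2) //
        IsLatinCube n L ∧ HasSymbolSign n L ε}
    = Nat.card {P : PP n // covers n P ∧ wt n P = ε} := by
  refine (Nat.card_congr (Equiv.ofBijective
    (fun x : {P : PP n // covers n P ∧ wt n P = ε} =>
      (⟨toL x.1 x.2.1, toL_latin x.1 x.2.1, toL_hss x.1 x.2.1 x.2.2⟩ :
        {L : Fin n × Fin n × Fin n → Fin (n ^ 2) //
          IsLatinCube n L ∧ HasSymbolSign n L ε})) ⟨?_, ?_⟩)).symm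
  · rintro ⟨P, hc, hw⟩ ⟨P', hc', hw'⟩ heq
    simp only [Subtype.mk.injEq] at heq
    have hP : ∀ s i, toL P hc (i, (P s).1 i, (P s).2 i) = s :=
      fun s i => toL_spec2 P hc s i
    have hP' : ∀ s i, toL P hc (i, (P' s).1 i, (P' s).2 i) = s := by
      intro s i; rw [heq]; exact toL_spec2 P' hc' s i
    exact Subtype.ext (P_unique _ (toL_latin P hc) P P' hP hP')
  · rintro ⟨L, hL, hSS⟩
    obtain ⟨P, hP, hw⟩ := hSS
    have hc : covers n P := latin_covers L hL P hP
    exact ⟨⟨P, hc, hw⟩, Subtype.ext (toL_eq L hL P hP hc)⟩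

end Counting

lemma signed_sum (n : ℕ) :
    (∑ P : PP n, if covers n P then ((wt n P : ℤˣ) : ℤ) else 0)
    = (Nat.card {P : PP n // covers n P ∧ wt n P = 1} : ℤ)
      - (Nat.card {P : PP n // covers n P ∧ wt n P = -1} : ℤ) := by
  classical
  have hsplit : ∀ P : PP n, (if covers n P then ((wt n P : ℤˣ) : ℤ) else 0)
      = (if covers n P ∧ wt n P = 1 then (1 : ℤ) else 0)
        - (if covers n P ∧ wt n P = -1 then (1 : ℤ) else 0) := by
    intro P
    rcases Int.units_eq_one_or (wt n P) with h | h <;>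
      by_cases hc : covers n P <;> simp [h, hc]
  rw [Finset.sum_congr rfl fun P _ => hsplit P, Finset.sum_sub_distrib,
    Finset.sum_boole, Finset.sum_boole]
  congr 1 <;>
  · rw [Nat.card_eq_fintype_card, Fintype.card_subtype]

end LatinAux

/-- `L^{se}_{n³} − L^{so}_{n³} = ∑_{A ∈ B_n} (−1)^{σ₀(A)} Det(A)^{n²}`, the sum over
all `n×n×n` 0/1-arrays `A`, where `σ₀(A)` is the number of zero entries of `A`. -/
theorem symbolSigned_latinCube_count_eq_sum_hyperDet_pow (n : ℕ) :
    (Nat.card {L : Fin n × Fin n × Fin n → Fin (n ^ 2) //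
        IsLatinCube n L ∧ HasSymbolSign n L 1} : ℤ) -
      (Nat.card {L : Fin n × Fin n × Fin n → Fin (n ^ 2) //
        IsLatinCube n L ∧ HasSymbolSign n L (-1)} : ℤ) =
      ∑ A : Fin n × Fin n × Fin n → Bool,
        (-1 : ℤ) ^ ((Finset.univ.filter fun p => A p = false).card) *
          (hyperDetBool n A) ^ (n ^ 2) := by
  rw [LatinAux.count_eq 1, LatinAux.count_eq (-1), ← LatinAux.signed_sum n,
    LatinAux.rhs_eq n]
end
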